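/- Let S be an o-minimal structure on the real field and f: (a,b) → ℝ a function belonging to S. Then f is differentiable at all but finitely many points of (a,b). -/

import Mathlib

/-- A structure on the real field `(ℝ,+,·)`: a sequence of boolean algebras of subsets of
`ℝⁿ` containing `ℝⁿ` and the diagonals, closed under products with `ℝ` on either side and
under coordinate projections, and containing the graphs of addition and multiplication. -/
structure RealStructure where
  sets : (n : ℕ) → Set (Set (Fin n → ℝ))
  univ_mem : ∀ n, Set.univ ∈ sets n
  union_mem : ∀ n, ∀ A ∈ sets n, ∀ B ∈ sets n, A ∪ B ∈ sets n
  compl_mem : ∀ n, ∀ A ∈ sets n, Aᶜ ∈ sets n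
  diag_mem : ∀ (n : ℕ) (i j : Fin n), {x : Fin n → ℝ | x i = x j} ∈ sets n
  prod_right_mem : ∀ n, ∀ A ∈ sets n,
    {x : Fin (n + 1) → ℝ | (fun i : Fin n => x i.castSucc) ∈ A} ∈ sets (n + 1)
  prod_left_mem : ∀ n, ∀ A ∈ sets n,
    {x : Fin (n + 1) → ℝ | (fun i : Fin n => x i.succ) ∈ A} ∈ sets (n + 1)
  proj_mem : ∀ n, ∀ A ∈ sets (n + 1),
    (fun (x : Fin (n + 1) → ℝ) (i : Fin n) => x i.castSucc) '' A ∈ sets n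
  add_mem : {x : Fin 3 → ℝ | x 0 + x 1 = x 2} ∈ sets 3
  mul_mem : {x : Fin 3 → ℝ | x 0 * x 1 = x 2} ∈ sets 3

/-- A map `f : A → ℝⁿ`, `A ⊆ ℝᵐ`, belongs to the structure `S` if its graph belongs to
`S_{m+n}`. -/
def RealStructure.FnIn (S : RealStructure) {m n : ℕ}
    (A : Set (Fin m → ℝ)) (f : (Fin m → ℝ) → (Fin n → ℝ)) : Prop :=
  {z : Fin (m + n) → ℝ | ∃ x ∈ A, z = Fin.append x (f x)} ∈ S.sets (m + n)

/-- A real-valued function `f : A → ℝ`, `A ⊆ ℝⁿ`, belongs to `S` if its graph belongs to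
`S_{n+1}`. -/
def RealStructure.Fn1In (S : RealStructure) {n : ℕ}
    (A : Set (Fin n → ℝ)) (f : (Fin n → ℝ) → ℝ) : Prop :=
  {z : Fin (n + 1) → ℝ | ∃ x ∈ A, z = Fin.snoc x (f x)} ∈ S.sets (n + 1)

/-- A one-variable function `f : D → ℝ`, `D ⊆ ℝ`, belongs to `S` if its graph belongs to
`S_2`. -/
def RealStructure.Fn1dIn (S : RealStructure) (D : Set ℝ) (f : ℝ → ℝ) : Prop :=
  {z : Fin 2 → ℝ | z 0 ∈ D ∧ f (z 0) = z 1} ∈ S.sets 2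

/-- A subset of `ℝ` is an interval (of any kind, possibly unbounded) or a point. -/
def IsIntervalOrPt (I : Set ℝ) : Prop :=
  (∃ a : ℝ, I = {a}) ∨ (∃ a b : ℝ, I = Set.Ioo a b) ∨ (∃ a : ℝ, I = Set.Ioi a) ∨
    (∃ a : ℝ, I = Set.Iio a) ∨ I = Set.univ ∨ I = ∅

/-- A structure on `(ℝ,+,·)` is o-minimal if the sets of `S_1` are exactly the finite
unions of points and intervals of all kinds. -/
def RealStructure.IsOMinimal (S : RealStructure) : Prop :=
  ∀ A : Set ℝ, ({x : Fin 1 → ℝ | x 0 ∈ A} ∈ S.sets 1 ↔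
    ∃ T : Finset (Set ℝ), (∀ I ∈ T, IsIntervalOrPt I) ∧ A = ⋃₀ (T : Set (Set ℝ)))

/-- A structure is polynomially bounded if every definable `f : ℝ → ℝ` is `O(t^N)` as
`t → +∞` for some `N ∈ ℕ`. -/
def RealStructure.IsPolyBounded (S : RealStructure) : Prop :=
  ∀ f : ℝ → ℝ, ({z : Fin 2 → ℝ | f (z 0) = z 1} ∈ S.sets 2) →
    ∃ (N : ℕ) (C : ℝ), ∀ᶠ t in Filter.atTop, |f t| ≤ C * t ^ N


/-!
Extending `f` by `0` outside `(a, b)` gives a definable `g : ℝ → ℝ` that agrees with `f` near every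
point of `(a, b)`. Differentiability at a point is a first-order property of the graph, so the set
of points where `g` is not differentiable is definable; if it were infinite, o-minimality would
give an open interval on which `g` is nowhere differentiable. O-minimality also makes one-sided
germs tame: on each side of `x`, eventually `g y < g x`, `g y = g x` or `g y > g x`, and the
middle case would make `g` locally constant. Shrinking the interval twice, every point has the
same germ type. Up to replacing `g` by `-g`, either `g` increases through every point, hence is
strictly monotone and differentiable almost everywhere by Lebesgue's theorem, or every point is a
strict local minimum, which happens only at countably many points. Either way the interval would
be a null set.
-/

open Set Filter Topology

section Analysis

variable {α β : Type*}

theorem Set.OrdConnected.eventually_nhdsGT_of_frequently [LinearOrder α] [TopologicalSpace α]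
    [OrderTopology α] {I : Set α} (hI : I.OrdConnected) {x : α} (h : ∃ᶠ y in 𝓝[>] x, y ∈ I) :
    ∀ᶠ y in 𝓝[>] x, y ∈ I := by
  obtain ⟨b, hbI, hxb⟩ := (h.and_eventually self_mem_nhdsWithin).exists
  filter_upwards [Ioo_mem_nhdsGT hxb] with z hz
  obtain ⟨a, haI, haz⟩ := (h.and_eventually (Ioo_mem_nhdsGT hz.1)).exists
  exact hI.out haI hbI ⟨haz.2.le, hz.2.le⟩

theorem Set.OrdConnected.eventually_nhdsLT_of_frequently [LinearOrder α] [TopologicalSpace α]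
    [OrderTopology α] {I : Set α} (hI : I.OrdConnected) {x : α} (h : ∃ᶠ y in 𝓝[<] x, y ∈ I) :
    ∀ᶠ y in 𝓝[<] x, y ∈ I := by
  obtain ⟨a, haI, hax⟩ := (h.and_eventually self_mem_nhdsWithin).exists
  filter_upwards [Ioo_mem_nhdsLT hax] with z hz
  obtain ⟨b, hbI, hbz⟩ := (h.and_eventually (Ioo_mem_nhdsLT hz.2)).exists
  exact hI.out haI hbI ⟨hz.1.le, hbz.1.le⟩

theorem eventually_differentiableAt_of_eventually_eq {𝕜 E F : Type*} [NontriviallyNormedField 𝕜]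
    [NormedAddCommGroup E] [NormedSpace 𝕜 E] [NormedAddCommGroup F] [NormedSpace 𝕜 F]
    {f : E → F} {s : Set E} {x : E} {c : F} (hs : IsOpen s) (h : ∀ᶠ y in 𝓝[s] x, f y = c) :
    ∀ᶠ y in 𝓝[s] x, DifferentiableAt 𝕜 f y := by
  rw [← eventually_eventually_nhdsWithin] at h
  filter_upwards [h, self_mem_nhdsWithin] with y hy hys
  rw [nhdsWithin_eq_nhds.2 (hs.mem_nhds hys)] at hy
  exact (differentiableAt_const c).congr_of_eventuallyEq hy

theorem strictMonoOn_of_eventually_lt [ConditionallyCompleteLinearOrder α] [TopologicalSpace α]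
    [OrderTopology α] [DenselyOrdered α] [LinearOrder β] {f : α → β} {s : Set α}
    (hs : s.OrdConnected) (hgt : ∀ x ∈ s, ∀ᶠ y in 𝓝[>] x, f x < f y)
    (hlt : ∀ x ∈ s, ∀ᶠ y in 𝓝[<] x, f y < f x) : StrictMonoOn f s := by
  intro x hx y hy hxy
  have hsub : Icc x y ⊆ s := hs.out hx hy
  -- `T` is the set of `t` such that `f x ≤ f` on `[x, t)`, written so as to be visibly closed.
  set T := {t | ∀ u, x ≤ u → f u < f x → t ≤ u}
  have hT : IsClosed T := by
    simp only [T, ofPred_forall]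
    exact isClosed_iInter fun u => isClosed_iInter fun _ => isClosed_iInter fun _ => isClosed_Iic
  have le_of_mem {t} (ht : t ∈ T) {u} (hxu : x ≤ u) (hut : u < t) : f x ≤ f u :=
    not_lt.1 fun h => (ht u hxu h).not_gt hut
  have exists_lt {t} (ht : t ∈ Ioc x y) : ∃ u ∈ Ioo x t, f u < f t :=
    haveI := nhdsLT_neBot_of_exists_lt ⟨x, ht.1⟩
    ((hlt t (hsub (Ioc_subset_Icc_self ht))).and (Ioo_mem_nhdsLT ht.1)).exists.imp
      fun _ h => ⟨h.2, h.1⟩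
  have hIcc : Icc x y ⊆ T := by
    refine (hT.inter isClosed_Icc).Icc_subset_of_forall_mem_nhdsGT_of_Icc_subset
      (fun u hxu _ => hxu) fun t ht htT => ?_
    have htT' : t ∈ T := htT ⟨ht.1, le_rfl⟩
    have hxt : f x ≤ f t := by
      rcases ht.1.eq_or_lt with rfl | hxt
      · exact le_rfl
      obtain ⟨u, hu, hfu⟩ := exists_lt ⟨hxt, ht.2.le⟩
      exact (le_of_mem htT' hu.1.le hu.2).trans hfu.le
    obtain ⟨w, htw, hw⟩ := (mem_nhdsGT_iff_exists_Ioo_subset' ht.2).1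
      (hgt t (hsub (Ico_subset_Icc_self ht)))
    refine mem_of_superset (Ioo_mem_nhdsGT htw) fun t' ht' u hxu hfu => ?_
    by_contra! hut'
    rcases lt_trichotomy u t with hut | rfl | htu
    · exact (htT' u hxu hfu).not_gt hut
    · exact hfu.not_ge hxt
    · exact hfu.not_ge (hxt.trans (hw ⟨htu, hut'.trans ht'.2⟩).le)
  obtain ⟨u, hu, hfu⟩ := exists_lt ⟨hxy, le_rfl⟩
  exact (le_of_mem (hIcc ⟨hxy.le, le_rfl⟩) hu.1.le hu.2).trans_lt hfu

theorem countable_setOf_eventually_nhdsNE_lt [TopologicalSpace α] [SecondCountableTopology α]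
    [Preorder β] (f : α → β) : {x | ∀ᶠ y in 𝓝[≠] x, f x < f y}.Countable := by
  have hB := TopologicalSpace.isBasis_countableBasis α
  have hU : ∀ x ∈ {x | ∀ᶠ y in 𝓝[≠] x, f x < f y}, ∃ U ∈ TopologicalSpace.countableBasis α,
      x ∈ U ∧ ∀ y ∈ U, y ≠ x → f x < f y := fun x hx =>
    hB.mem_nhds_iff.1 (eventually_nhdsWithin_iff.1 hx)
  choose! U hUB hxU hU using hU
  refine MapsTo.countable_of_injOn hUB (fun x hx x' hx' hxx' => ?_)
    (TopologicalSpace.countable_countableBasis α)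
  by_contra hne
  exact (hU x hx x' (hxx' ▸ hxU x' hx') (Ne.symm hne)).asymm
    (hU x' hx' x (hxx' ▸ hxU x hx) hne)

theorem differentiableAt_iff_exists_abs_le {g : ℝ → ℝ} (x : ℝ) :
    DifferentiableAt ℝ g x ↔ ∃ L, ∀ e, 0 < e → ∃ δ, 0 < δ ∧
      ∀ y, |y - x| < δ → |g y - g x - (y - x) * L| ≤ e * |y - x| := by
  refine (⟨fun h => ⟨_, h.hasDerivAt⟩, fun ⟨_, h⟩ => h.differentiableAt⟩ :
    DifferentiableAt ℝ g x ↔ ∃ L, HasDerivAt g L x).trans ?_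
  simp only [hasDerivAt_iff_isLittleO, Asymptotics.isLittleO_iff, Metric.eventually_nhds_iff,
    Real.dist_eq, Real.norm_eq_abs, smul_eq_mul]

end Analysis

namespace RealStructure

variable {S : RealStructure} {m n : ℕ}

def Definable (S : RealStructure) (n : ℕ) (P : (Fin n → ℝ) → Prop) : Prop :=
  {x | P x} ∈ S.sets n

def DefinableFun (S : RealStructure) (n : ℕ) (F : (Fin n → ℝ) → ℝ) : Prop :=
  S.Definable (n + 1) fun z => F (Fin.init z) = z (Fin.last n)

namespace Definable

variable {P Q : (Fin n → ℝ) → Prop}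

theorem of_iff (hP : S.Definable n P) (h : ∀ x, P x ↔ Q x) : S.Definable n Q := by
  rwa [Definable, ← Set.ext h]

theorem const_true : S.Definable n fun _ => True := S.univ_mem n

theorem or (hP : S.Definable n P) (hQ : S.Definable n Q) : S.Definable n fun x => P x ∨ Q x :=
  S.union_mem n _ hP _ hQ

theorem not (hP : S.Definable n P) : S.Definable n fun x => ¬P x :=
  S.compl_mem n _ hP

theorem and (hP : S.Definable n P) (hQ : S.Definable n Q) : S.Definable n fun x => P x ∧ Q x :=
  (hP.not.or hQ.not).not.of_iff fun _ => not_or.trans (by rw [not_not, not_not])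

theorem imp (hP : S.Definable n P) (hQ : S.Definable n Q) : S.Definable n fun x => P x → Q x :=
  (hP.not.or hQ).of_iff fun _ => imp_iff_not_or.symm

theorem exists_last {R : (Fin n → ℝ) → ℝ → Prop}
    (h : S.Definable (n + 1) fun z => R (Fin.init z) (z (Fin.last n))) :
    S.Definable n fun x => ∃ t, R x t := by
  have h' : S.Definable n fun x =>
      ∃ z : Fin (n + 1) → ℝ, R (Fin.init z) (z (Fin.last n)) ∧ Fin.init z = x :=
    S.proj_mem n _ h
  exact h'.of_iff fun x => ⟨fun ⟨z, hz, hzx⟩ => ⟨z (Fin.last n), hzx ▸ hz⟩,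
    fun ⟨t, ht⟩ => ⟨Fin.snoc x t, by simpa using ht, Fin.init_snoc _ _⟩⟩

theorem forall_last {R : (Fin n → ℝ) → ℝ → Prop}
    (h : S.Definable (n + 1) fun z => R (Fin.init z) (z (Fin.last n))) :
    S.Definable n fun x => ∀ t, R x t :=
  (exists_last (R := fun x t => ¬R x t) h.not).not.of_iff fun _ => not_exists_not

theorem forall_fin {k : ℕ} {R : Fin k → (Fin n → ℝ) → Prop} (h : ∀ j, S.Definable n (R j)) :
    S.Definable n fun x => ∀ j, R j x := by
  induction k with
  | zero => exact const_true.of_iff fun _ => by simp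
  | succ k ih =>
    exact ((h 0).and (ih fun j => h j.succ)).of_iff
      fun x => (Fin.forall_fin_succ (P := fun j => R j x)).symm

theorem exists_append {k : ℕ} {R : (Fin (n + k) → ℝ) → Prop} (h : S.Definable (n + k) R) :
    S.Definable n fun x => ∃ y : Fin k → ℝ, R (Fin.append x y) := by
  induction k with
  | zero => exact h.of_iff fun x => ⟨fun hx => ⟨Fin.elim0, by rwa [Fin.append_elim0]⟩,
      fun ⟨y, hy⟩ => by rwa [Subsingleton.elim y Fin.elim0, Fin.append_elim0] at hy⟩
  | succ k ih =>
    refine (ih (exists_last (R := fun w t => R (Fin.snoc w t))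
      (h.of_iff fun z => by rw [Fin.snoc_init_self]))).of_iff
      fun x => ⟨fun ⟨y, t, hyt⟩ => ⟨Fin.snoc y t, by rwa [Fin.append_snoc]⟩, fun ⟨y, hy⟩ => ?_⟩
    exact ⟨Fin.init y, y (Fin.last k), by rwa [← Fin.append_snoc, Fin.snoc_init_self]⟩

theorem shift {P : (Fin m → ℝ) → Prop} (hP : S.Definable m P) (k : ℕ) {N : ℕ}
    (hN : k + m = N) : S.Definable N fun z => P fun j => z ⟨k + j, by omega⟩ := by
  induction k generalizing N with
  | zero =>
    obtain rfl : m = N := by omega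
    exact hP.of_iff fun z => by simp
  | succ k ih =>
    obtain ⟨N, rfl⟩ : ∃ N', N = N' + 1 := ⟨k + m, by omega⟩
    refine of_iff (S.prod_left_mem N _ (ih (N := N) (by omega))) fun z => ?_
    exact Iff.of_eq (congrArg P (funext fun j => congrArg z (Fin.ext (by simp; omega))))

theorem comp_of_graph {P : (Fin m → ℝ) → Prop} (hP : S.Definable m P)
    {F : Fin m → (Fin n → ℝ) → ℝ} (hF : ∀ i, S.Definable (n + m) fun z =>
      F i (fun j => z (Fin.castAdd m j)) = z (Fin.natAdd n i)) :
    S.Definable n fun x => P fun i => F i x := by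
  have hP' : S.Definable (n + m) fun z => P fun j => z (Fin.natAdd n j) := hP.shift n rfl
  refine (exists_append ((forall_fin hF).and hP')).of_iff fun x => ?_
  simp only [Fin.append_left, Fin.append_right]
  exact ⟨fun ⟨y, hy, hPy⟩ => funext hy ▸ hPy, fun h => ⟨_, fun _ => rfl, h⟩⟩

theorem reindex {P : (Fin m → ℝ) → Prop} (hP : S.Definable m P) (σ : Fin m → Fin n) :
    S.Definable n fun x => P (x ∘ σ) :=
  hP.comp_of_graph fun i => S.diag_mem (n + m) (Fin.castAdd m (σ i)) (Fin.natAdd n i)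

theorem comp {P : (Fin m → ℝ) → Prop} (hP : S.Definable m P) {F : Fin m → (Fin n → ℝ) → ℝ}
    (hF : ∀ i, S.DefinableFun n (F i)) : S.Definable n fun x => P fun i => F i x :=
  hP.comp_of_graph fun i => ((hF i).reindex (Fin.snoc (Fin.castAdd m) (Fin.natAdd n i))).of_iff
    fun z => by simp [Fin.init_def]

end Definable

namespace DefinableFun

variable {F G : (Fin n → ℝ) → ℝ}

theorem coord (i : Fin n) : S.DefinableFun n fun x => x i :=
  S.diag_mem (n + 1) i.castSucc (Fin.last n)

theorem comp_init (hF : S.DefinableFun n F) : S.DefinableFun (n + 1) fun z => F (Fin.init z) :=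
  (hF.reindex (Fin.snoc (fun i => i.castSucc.castSucc) (Fin.last (n + 1)))).of_iff
    fun z => by simp [Fin.init_def]

theorem comp {G : (Fin m → ℝ) → ℝ} (hG : S.DefinableFun m G) {F : Fin m → (Fin n → ℝ) → ℝ}
    (hF : ∀ i, S.DefinableFun n (F i)) : S.DefinableFun n fun x => G fun i => F i x := by
  refine (Definable.comp hG (F := Fin.snoc (α := fun _ => (Fin (n + 1) → ℝ) → ℝ)
    (fun i z => F i (Fin.init z)) fun z => z (Fin.last n)) (Fin.lastCases ?_ fun i => ?_)).of_iff
    fun z => by simp [Fin.init_def]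
  · simpa using coord (Fin.last n)
  · simpa using (hF i).comp_init

theorem zero : S.DefinableFun n fun _ => 0 :=
  (Definable.reindex S.add_mem fun _ => Fin.last n).of_iff fun z => by
    simp only [Function.comp_apply]
    constructor <;> intro h <;> linarith

theorem add (hF : S.DefinableFun n F) (hG : S.DefinableFun n G) :
    S.DefinableFun n fun x => F x + G x :=
  comp (G := fun y : Fin 2 → ℝ => y 0 + y 1) S.add_mem (F := ![F, G])
    (Fin.forall_fin_two.2 ⟨hF, hG⟩)

theorem mul (hF : S.DefinableFun n F) (hG : S.DefinableFun n G) :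
    S.DefinableFun n fun x => F x * G x :=
  comp (G := fun y : Fin 2 → ℝ => y 0 * y 1) S.mul_mem (F := ![F, G])
    (Fin.forall_fin_two.2 ⟨hF, hG⟩)

theorem sub (hF : S.DefinableFun n F) (hG : S.DefinableFun n G) :
    S.DefinableFun n fun x => F x - G x := by
  have hsub : S.DefinableFun 2 fun y => y 0 - y 1 :=
    (Definable.reindex S.add_mem ![1, 2, 0]).of_iff fun z => by
      simp [Fin.init_def]
      constructor <;> intro h <;> linarith
  exact comp hsub (F := ![F, G]) (Fin.forall_fin_two.2 ⟨hF, hG⟩)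

theorem neg (hF : S.DefinableFun n F) : S.DefinableFun n fun x => -F x := by
  simpa using zero.sub hF

theorem apply {g : ℝ → ℝ} (hg : S.Definable 2 fun z => g (z 0) = z 1)
    (hF : S.DefinableFun n F) : S.DefinableFun n fun x => g (F x) :=
  comp (G := fun y : Fin 1 → ℝ => g (y 0)) hg (F := fun _ => F) fun _ => hF

end DefinableFun

open DefinableFun

namespace Definable

variable {F G : (Fin n → ℝ) → ℝ}

theorem eq (hF : S.DefinableFun n F) (hG : S.DefinableFun n G) :
    S.Definable n fun x => F x = G x :=
  comp (P := fun y : Fin 2 → ℝ => y 0 = y 1) (S.diag_mem 2 0 1) (F := ![F, G])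
    (Fin.forall_fin_two.2 ⟨hF, hG⟩)

theorem le (hF : S.DefinableFun n F) (hG : S.DefinableFun n G) :
    S.Definable n fun x => F x ≤ G x := by
  refine (exists_last (R := fun x t => F x + t * t = G x)
    (eq (hF.comp_init.add ((coord _).mul (coord _))) hG.comp_init)).of_iff fun x => ?_
  refine ⟨fun ⟨t, ht⟩ => ht ▸ le_add_of_nonneg_right (mul_self_nonneg t), fun h => ?_⟩
  exact ⟨√(G x - F x), by rw [Real.mul_self_sqrt (sub_nonneg.2 h)]; ring⟩

theorem lt (hF : S.DefinableFun n F) (hG : S.DefinableFun n G) :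
    S.Definable n fun x => F x < G x :=
  (le hG hF).not.of_iff fun _ => not_le

theorem mem {A : Set ℝ} (hA : S.Definable 1 fun v => v 0 ∈ A) (hF : S.DefinableFun n F) :
    S.Definable n fun x => F x ∈ A :=
  hA.comp (F := fun _ => F) fun _ => hF

end Definable

open Definable

theorem DefinableFun.abs {F : (Fin n → ℝ) → ℝ} (hF : S.DefinableFun n F) :
    S.DefinableFun n fun x => |F x| := by
  refine ((eq ((coord (Fin.last n)).mul (coord (Fin.last n))) (hF.comp_init.mul hF.comp_init)).and
    (le zero (coord (Fin.last n)))).of_iff fun z => ?_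
  show _ ↔ |F (Fin.init z)| = z (Fin.last n)
  constructor
  · rintro ⟨h, h0⟩
    rw [← Real.sqrt_mul_self_eq_abs, ← h, Real.sqrt_mul_self h0]
  · rintro h
    exact ⟨by rw [← h, abs_mul_abs_self], h ▸ abs_nonneg _⟩

theorem definable_indicator {D : Set ℝ} {f : ℝ → ℝ} (hD : S.Definable 1 fun v => v 0 ∈ D)
    (hf : S.Fn1dIn D f) : S.Definable 2 fun z => D.indicator f (z 0) = z 1 := by
  refine (Definable.or hf ((mem hD (coord 0)).not.and (eq zero (coord 1)))).of_iff fun z => ?_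
  by_cases h : z 0 ∈ D <;> simp [h]

variable {g : ℝ → ℝ}

theorem definable_differentiableAt (hg : S.Definable 2 fun z => g (z 0) = z 1) :
    S.Definable 1 fun v => DifferentiableAt ℝ g (v 0) := by
  -- the coordinates are `x, L, e, δ, y`
  have hmatrix : S.Definable 5 fun v => |v 4 - v 0| < v 3 →
      |g (v 4) - g (v 0) - (v 4 - v 0) * v 1| ≤ v 2 * |v 4 - v 0| :=
    (lt ((coord 4).sub (coord 0)).abs (coord 3)).imp
      (le ((((coord 4).apply hg).sub ((coord 0).apply hg)).sub
        (((coord 4).sub (coord 0)).mul (coord 1))).abs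
        ((coord 2).mul ((coord 4).sub (coord 0)).abs))
  refine .of_iff ?_ fun v => (differentiableAt_iff_exists_abs_le (v 0)).symm
  exact exists_last <| forall_last <| (lt zero (coord _)).imp <| exists_last <|
    (lt zero (coord _)).and <| forall_last hmatrix

theorem definable_eventually_nhdsGT_lt (hg : S.Definable 2 fun z => g (z 0) = z 1) :
    S.Definable 1 fun v => ∀ᶠ y in 𝓝[>] v 0, g (v 0) < g y := by
  have hmatrix : S.Definable 3 fun v => v 0 < v 2 → v 2 < v 1 → g (v 0) < g (v 2) :=
    (lt (coord 0) (coord 2)).imp <| (lt (coord 2) (coord 1)).imp <|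
      lt ((coord 0).apply hg) ((coord 2).apply hg)
  have hformula : S.Definable 1 fun v => ∃ u, v 0 < u ∧ ∀ y, v 0 < y → y < u → g (v 0) < g y :=
    exists_last <| (lt (coord _) (coord _)).and <| forall_last hmatrix
  refine hformula.of_iff fun v => ?_
  simp only [(nhdsGT_basis (v 0)).eventually_iff, mem_Ioo, and_imp]

theorem definable_eventually_nhdsLT_lt (hg : S.Definable 2 fun z => g (z 0) = z 1) :
    S.Definable 1 fun v => ∀ᶠ y in 𝓝[<] v 0, g y < g (v 0) := by
  have hmatrix : S.Definable 3 fun v => v 1 < v 2 → v 2 < v 0 → g (v 2) < g (v 0) :=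
    (lt (coord 1) (coord 2)).imp <| (lt (coord 2) (coord 0)).imp <|
      lt ((coord 2).apply hg) ((coord 0).apply hg)
  have hformula : S.Definable 1 fun v => ∃ u, u < v 0 ∧ ∀ y, u < y → y < v 0 → g y < g (v 0) :=
    exists_last <| (lt (coord _) (coord _)).and <| forall_last hmatrix
  refine hformula.of_iff fun v => ?_
  simp only [(nhdsLT_basis (v 0)).eventually_iff, mem_Ioo, and_imp]

end RealStructure

theorem IsIntervalOrPt.ordConnected {I : Set ℝ} (h : IsIntervalOrPt I) : I.OrdConnected := by
  rcases h with ⟨a, rfl⟩ | ⟨a, b, rfl⟩ | ⟨a, rfl⟩ | ⟨a, rfl⟩ | rfl | rfl <;> infer_instance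

namespace RealStructure.IsOMinimal

open MeasureTheory DefinableFun

variable {S : RealStructure} {A : Set ℝ} {g : ℝ → ℝ}

theorem definable_of_isIntervalOrPt (hS : S.IsOMinimal) {I : Set ℝ} (hI : IsIntervalOrPt I) :
    S.Definable 1 fun v => v 0 ∈ I :=
  (hS I).2 ⟨{I}, by simpa using hI, by simp⟩

theorem definable_lt_coe (hS : S.IsOMinimal) (a : EReal) :
    S.Definable 1 fun v => a < (v 0 : EReal) := by
  induction a using EReal.rec with
  | bot => exact Definable.const_true.of_iff fun _ => iff_of_true trivial (EReal.bot_lt_coe _)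
  | coe a =>
    have hIoi : S.Definable 1 fun v => v 0 ∈ Ioi a :=
      hS.definable_of_isIntervalOrPt (Or.inr (Or.inr (Or.inl ⟨a, rfl⟩)))
    exact hIoi.of_iff fun _ => EReal.coe_lt_coe_iff.symm
  | top => exact Definable.const_true.not.of_iff fun _ => iff_of_false (not_not.2 trivial) not_top_lt

theorem definable_coe_lt (hS : S.IsOMinimal) (b : EReal) :
    S.Definable 1 fun v => (v 0 : EReal) < b := by
  induction b using EReal.rec with
  | bot => exact Definable.const_true.not.of_iff fun _ => iff_of_false (not_not.2 trivial) not_lt_bot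
  | coe b =>
    have hIio : S.Definable 1 fun v => v 0 ∈ Iio b :=
      hS.definable_of_isIntervalOrPt (Or.inr (Or.inr (Or.inr (Or.inl ⟨b, rfl⟩))))
    exact hIio.of_iff fun _ => EReal.coe_lt_coe_iff.symm
  | top => exact Definable.const_true.of_iff fun _ => iff_of_true trivial (EReal.coe_lt_top _)

theorem exists_finset_ordConnected_eq_sUnion (hS : S.IsOMinimal) (hA : S.Definable 1 fun v => v 0 ∈ A) :
    ∃ T : Finset (Set ℝ), (∀ I ∈ T, I.OrdConnected) ∧ A = ⋃₀ ↑T := by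
  obtain ⟨T, hT, rfl⟩ := (hS A).1 hA
  exact ⟨T, fun I hI => (hT I hI).ordConnected, rfl⟩

theorem eventually_of_frequently (hS : S.IsOMinimal) {l : Filter ℝ}
    (hl : ∀ I : Set ℝ, I.OrdConnected → (∃ᶠ y in l, y ∈ I) → ∀ᶠ y in l, y ∈ I)
    (hA : S.Definable 1 fun v => v 0 ∈ A) (h : ∃ᶠ y in l, y ∈ A) : ∀ᶠ y in l, y ∈ A := by
  obtain ⟨T, hT, rfl⟩ := hS.exists_finset_ordConnected_eq_sUnion hA
  by_contra hne
  have hout : ∀ I ∈ T, ∀ᶠ y in l, y ∉ I := fun I hI => not_frequently.1 fun hfr =>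
    hne ((hl I (hT I hI) hfr).mono fun y hy => ⟨I, hI, hy⟩)
  obtain ⟨y, ⟨I, hI, hyI⟩, hy⟩ := (h.and_eventually ((eventually_all_finset T).2 hout)).exists
  exact hy I hI hyI

theorem exists_Ioo_subset_of_infinite (hS : S.IsOMinimal) (hA : S.Definable 1 fun v => v 0 ∈ A)
    (hinf : A.Infinite) : ∃ p q, p < q ∧ Ioo p q ⊆ A := by
  obtain ⟨T, hT, rfl⟩ := hS.exists_finset_ordConnected_eq_sUnion hA
  obtain ⟨I, hI, hIinf⟩ : ∃ I ∈ T, I.Infinite := by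
    by_contra! h
    exact hinf (T.finite_toSet.sUnion h)
  obtain ⟨p, hp, q, hq, hpq⟩ := hIinf.nontrivial.exists_lt
  exact ⟨p, q, hpq,
    (Ioo_subset_Icc_self.trans ((hT I hI).out hp hq)).trans (subset_sUnion_of_mem hI)⟩

theorem exists_Ioo_subset_forall_or_forall (hS : S.IsOMinimal) {P Q : ℝ → Prop}
    (hP : S.Definable 1 fun v => P (v 0)) {p q : ℝ} (hpq : p < q)
    (h : ∀ x ∈ Ioo p q, P x ∨ Q x) :
    ∃ p' q', p' < q' ∧ Ioo p' q' ⊆ Ioo p q ∧ ((∀ x ∈ Ioo p' q', P x) ∨ ∀ x ∈ Ioo p' q', Q x) := by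
  have hI : S.Definable 1 fun v => v 0 ∈ Ioo p q :=
    hS.definable_of_isIntervalOrPt (Or.inr (Or.inl ⟨p, q, rfl⟩))
  by_cases hPinf : (Ioo p q ∩ {x | P x}).Infinite
  · obtain ⟨p', q', hpq', hsub⟩ := hS.exists_Ioo_subset_of_infinite (hI.and hP) hPinf
    exact ⟨p', q', hpq', hsub.trans inter_subset_left, .inl fun x hx => (hsub hx).2⟩
  · have hQinf : (Ioo p q \ {x | P x}).Infinite := fun hfin =>
      Ioo_infinite hpq (inter_union_sdiff (Ioo p q) {x | P x} ▸ (not_infinite.1 hPinf).union hfin)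
    obtain ⟨p', q', hpq', hsub⟩ := hS.exists_Ioo_subset_of_infinite (hI.and hP.not) hQinf
    exact ⟨p', q', hpq', hsub.trans sdiff_subset,
      .inr fun x hx => (h x (hsub hx).1).resolve_left (hsub hx).2⟩

theorem eventually_lt_or_eventually_lt (hS : S.IsOMinimal)
    (hg : S.Definable 2 fun z => g (z 0) = z 1) {x : ℝ} {s : Set ℝ} (hs : IsOpen s)
    [(𝓝[s] x).NeBot]
    (hl : ∀ I : Set ℝ, I.OrdConnected → (∃ᶠ y in 𝓝[s] x, y ∈ I) → ∀ᶠ y in 𝓝[s] x, y ∈ I)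
    (hnd : ∀ᶠ y in 𝓝 x, ¬DifferentiableAt ℝ g y) :
    (∀ᶠ y in 𝓝[s] x, g x < g y) ∨ ∀ᶠ y in 𝓝[s] x, g y < g x := by
  have hpreimage {B : Set ℝ} (hB : IsIntervalOrPt B) (h : ∃ᶠ y in 𝓝[s] x, g y ∈ B) :
      ∀ᶠ y in 𝓝[s] x, g y ∈ B := by
    have hdef : S.Definable 1 fun v => g (v 0) ∈ B :=
      Definable.mem (hS.definable_of_isIntervalOrPt hB) ((coord 0).apply hg)
    exact hS.eventually_of_frequently (A := g ⁻¹' B) hl hdef h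
  have hne : ∀ᶠ y in 𝓝[s] x, g y ≠ g x := not_frequently.1 fun hfr => by
    have heq := hpreimage (B := {g x}) (Or.inl ⟨_, rfl⟩) hfr
    obtain ⟨y, hdiff, hndiff⟩ := ((eventually_differentiableAt_of_eventually_eq (𝕜 := ℝ) hs heq).and
      (mem_nhdsWithin_of_mem_nhds hnd)).exists
    exact hndiff hdiff
  by_cases hfr : ∃ᶠ y in 𝓝[s] x, g y ∈ Ioi (g x)
  · exact .inl (hpreimage (Or.inr (Or.inr (Or.inl ⟨_, rfl⟩))) hfr)
  · exact .inr ((not_frequently.1 hfr).and hne |>.mono fun y h => lt_of_le_of_ne (not_lt.1 h.1) h.2)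

theorem not_forall_eventually_nhdsGT_lt (hS : S.IsOMinimal)
    (hg : S.Definable 2 fun z => g (z 0) = z 1) {p q : ℝ} (hpq : p < q)
    (hnd : ∀ x ∈ Ioo p q, ¬DifferentiableAt ℝ g x) :
    ¬∀ x ∈ Ioo p q, ∀ᶠ y in 𝓝[>] x, g x < g y := by
  intro hR
  have hL (x) (hx : x ∈ Ioo p q) :
      (∀ᶠ y in 𝓝[<] x, g y < g x) ∨ ∀ᶠ y in 𝓝[<] x, g x < g y :=
    (hS.eventually_lt_or_eventually_lt hg isOpen_Iio
      (fun _ hI => hI.eventually_nhdsLT_of_frequently)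
      (eventually_of_mem (isOpen_Ioo.mem_nhds hx) hnd)).symm
  obtain ⟨p', q', hpq', hsub, hup | hmin⟩ :=
    hS.exists_Ioo_subset_forall_or_forall (definable_eventually_nhdsLT_lt hg) hpq hL
  all_goals refine ((Measure.measure_Ioo_pos volume).2 hpq').ne' ?_
  · have hmono : StrictMonoOn g (Ioo p' q') :=
      strictMonoOn_of_eventually_lt ordConnected_Ioo (fun x hx => hR x (hsub hx)) hup
    rw [measure_eq_zero_iff_ae_notMem]
    filter_upwards [hmono.monotoneOn.ae_differentiableWithinAt_of_mem] with x hx hmem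
    exact hnd x (hsub hmem) ((hx hmem).differentiableAt (isOpen_Ioo.mem_nhds hmem))
  · refine Countable.measure_zero ((countable_setOf_eventually_nhdsNE_lt g).mono
      fun x hx => ?_) volume
    rw [mem_ofPred_eq, ← nhdsLT_sup_nhdsGT]
    exact eventually_sup.2 ⟨hmin x hx, hR x (hsub hx)⟩

theorem finite_setOf_not_differentiableAt (hS : S.IsOMinimal)
    (hg : S.Definable 2 fun z => g (z 0) = z 1) : {x | ¬DifferentiableAt ℝ g x}.Finite := by
  by_contra hinf
  obtain ⟨p, q, hpq, hnd⟩ :=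
    hS.exists_Ioo_subset_of_infinite (definable_differentiableAt hg).not hinf
  have hR (x) (hx : x ∈ Ioo p q) :
      (∀ᶠ y in 𝓝[>] x, g x < g y) ∨ ∀ᶠ y in 𝓝[>] x, -g x < -g y := by
    simpa only [neg_lt_neg_iff] using hS.eventually_lt_or_eventually_lt hg isOpen_Ioi
      (fun _ hI => hI.eventually_nhdsGT_of_frequently)
      (eventually_of_mem (isOpen_Ioo.mem_nhds hx) hnd)
  obtain ⟨p', q', hpq', hsub, hup | hdown⟩ :=
    hS.exists_Ioo_subset_forall_or_forall (definable_eventually_nhdsGT_lt hg) hpq hR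
  · exact hS.not_forall_eventually_nhdsGT_lt hg hpq' (fun x hx => hnd (hsub hx)) hup
  · exact hS.not_forall_eventually_nhdsGT_lt (g := fun x => -g x) ((coord 0).apply hg).neg hpq'
      (fun x hx => differentiableAt_neg_iff.not.2 (hnd (hsub hx))) hdown

end RealStructure.IsOMinimal

theorem ominimal_differentiable_off_finite_general
    (S : RealStructure) (hS : S.IsOMinimal)
    (a b : EReal) (f : ℝ → ℝ)
    (hf : S.Fn1dIn {x : ℝ | a < (x : EReal) ∧ (x : EReal) < b} f) :
    {x : ℝ | (a < (x : EReal) ∧ (x : EReal) < b) ∧ ¬ DifferentiableAt ℝ f x}.Finite := by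
  set D := {x : ℝ | a < (x : EReal) ∧ (x : EReal) < b}
  have hD : IsOpen D := (isOpen_lt continuous_const continuous_coe_real_ereal).inter
    (isOpen_lt continuous_coe_real_ereal continuous_const)
  have hDdef : S.Definable 1 fun v => v 0 ∈ D := (hS.definable_lt_coe a).and (hS.definable_coe_lt b)
  refine (hS.finite_setOf_not_differentiableAt (RealStructure.definable_indicator hDdef hf)).subset
    fun x ⟨hx, hndf⟩ hdiff => hndf (hdiff.congr_of_eventuallyEq ?_)
  filter_upwards [hD.mem_nhds hx] with y hy using (indicator_of_mem hy f).symm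

/-- In an o-minimal structure `S` on the real field, a function `f : (a,b) → ℝ` belonging
to `S` is differentiable at all but finitely many points of `(a,b)`. -/
theorem ominimal_differentiable_off_finite
    (S : RealStructure) (hS : S.IsOMinimal)
    (a b : EReal) (hab : a < b) (f : ℝ → ℝ)
    (hf : S.Fn1dIn {x : ℝ | a < (x : EReal) ∧ (x : EReal) < b} f) :
    {x : ℝ | (a < (x : EReal) ∧ (x : EReal) < b) ∧ ¬ DifferentiableAt ℝ f x}.Finite :=
  ominimal_differentiable_off_finite_general S hS a b f hf
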